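/- A bidirected graph B is uniformly bidirected up to reorientation if and only if its associated signed graph Σ_B is antibalanced. -/

import Mathlib

/-- The product of edge signs along a walk in a graph with edge signature `σ`. -/
def walkSign {V : Type*} (σ : V → V → ℤˣ) {G : SimpleGraph V} {u v : V}
    (w : G.Walk u v) : ℤˣ :=
  (w.darts.map (fun d => σ d.toProd.1 d.toProd.2)).prod

section Aux

open SimpleGraph

variable {V : Type*} {G : SimpleGraph V}

lemma walkSign_nil (σ : V → V → ℤˣ) (v : V) :
    walkSign σ (Walk.nil : G.Walk v v) = 1 := rfl

lemma walkSign_cons (σ : V → V → ℤˣ) {u v w : V} (h : G.Adj u v) (p : G.Walk v w) :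
    walkSign σ (Walk.cons h p) = σ u v * walkSign σ p := by
  simp [walkSign]

lemma walkSign_append (σ : V → V → ℤˣ) {u v w : V} (p : G.Walk u v) (q : G.Walk v w) :
    walkSign σ (p.append q) = walkSign σ p * walkSign σ q := by
  simp [walkSign, Walk.darts_append]

lemma walkSign_copy (σ : V → V → ℤˣ) {u v u' v' : V} (p : G.Walk u v)
    (hu : u = u') (hv : v = v') :
    walkSign σ (p.copy hu hv) = walkSign σ p := by
  subst hu hv; rfl

lemma walkSign_reverse (σ : V → V → ℤˣ) (hs : ∀ a b, σ a b = σ b a) {u v : V}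
    (p : G.Walk u v) : walkSign σ p.reverse = walkSign σ p := by
  rw [walkSign, Walk.darts_reverse, List.map_reverse, List.prod_reverse, List.map_map,
    walkSign]
  congr 1
  apply List.map_congr_left
  intro d _
  exact (hs _ _).symm

lemma walkSign_neg (f : V → V → ℤˣ) {u v : V} (w : G.Walk u v) :
    walkSign (fun a b => -(f a b)) w = (-1) ^ w.length * walkSign f w := by
  induction w with
  | nil => simp [walkSign_nil]
  | cons h p ih =>
    rw [walkSign_cons, walkSign_cons, ih, Walk.length_cons, pow_succ]
    rw [show ((-1 : ℤˣ)) ^ p.length * -1 = -((-1) ^ p.length) by simp]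
    rw [neg_mul, neg_mul, mul_left_comm]

lemma mul_helper (a b c : ℤˣ) : a * b * (b * c) = a * c := by
  rcases Int.units_eq_one_or a with rfl | rfl <;>
  rcases Int.units_eq_one_or b with rfl | rfl <;>
  rcases Int.units_eq_one_or c with rfl | rfl <;> simp_all

lemma walkSign_telescope (f : V → V → ℤˣ) (ε : V → ℤˣ)
    (hf : ∀ a b, G.Adj a b → f a b = ε a * ε b) {u v : V} (w : G.Walk u v) :
    walkSign f w = ε u * ε v := by
  induction w with
  | nil => rw [walkSign_nil]; exact (Int.units_mul_self _).symm
  | cons h p ih =>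
    rw [walkSign_cons, ih, hf _ _ h, mul_helper]

lemma units_helper (A B C D E : ℤˣ) (h1 : C * D = 1) (h2 : A * (B * E) = 1) :
    A * (B * (C * (D * E))) = 1 := by
  rcases Int.units_eq_one_or A with rfl | rfl <;>
  rcases Int.units_eq_one_or B with rfl | rfl <;>
  rcases Int.units_eq_one_or C with rfl | rfl <;>
  rcases Int.units_eq_one_or D with rfl | rfl <;>
  rcases Int.units_eq_one_or E with rfl | rfl <;> simp_all

/-- If every cycle has `τ`-sign `1`, then every closed walk has `τ`-sign `1`. -/
lemma closed_walk_sign_eq_one (τ : V → V → ℤˣ) (hs : ∀ a b, τ a b = τ b a)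
    (hcyc : ∀ (v : V) (w : G.Walk v v), w.IsCycle → walkSign τ w = 1) :
    ∀ (n : ℕ) (v : V) (w : G.Walk v v), w.length ≤ n → walkSign τ w = 1 := by
  classical
  intro n
  induction n using Nat.strong_induction_on with
  | _ n IH =>
  intro v w hw
  cases w with
  | nil => rfl
  | @cons _ y _ h p =>
    have hn : p.length + 1 ≤ n := by simpa using hw
    have hv : v ∈ p.support := p.end_mem_support
    have hspec := p.take_spec hv
    set q := p.takeUntil v hv with hqdef
    set r := p.dropUntil v hv with hrdef
    have hlenqr : q.length + r.length = p.length := by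
      have := congrArg Walk.length hspec
      simpa [Walk.length_append] using this
    have hr1 : walkSign τ r = 1 := IH p.length (by omega) v r (by omega)
    have hdecomp : walkSign τ (Walk.cons h p) =
        τ v y * (walkSign τ q * walkSign τ r) := by
      conv_lhs => rw [← hspec]
      rw [walkSign_cons, walkSign_append]
    rw [hdecomp, hr1, mul_one]
    have hcount : q.support.count v = 1 := p.count_support_takeUntil_eq_one hv
    by_cases hcycle : (Walk.cons h q).IsCycle
    · have := hcyc v _ hcycle
      rwa [walkSign_cons] at this
    · rw [Walk.cons_isCycle_iff] at hcycle
      by_cases hpath : q.IsPath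
      · -- the edge s(v,y) occurs in q; then q.reverse starts with it
        have hedge : s(v, y) ∈ q.edges := by tauto
        have hnn : ¬ q.reverse.Nil := by
          rw [Walk.nil_iff_length_eq, Walk.length_reverse]
          intro h0
          exact h.ne' (Walk.eq_of_length_eq_zero h0)
        obtain ⟨z, h3, q3, hq3⟩ := Walk.not_nil_iff.mp hnn
        have hcount3 : q3.support.count v = 0 := by
          have h1 : q.reverse.support.count v = 1 := by
            rw [Walk.support_reverse, List.count_reverse]; exact hcount
          rw [hq3, Walk.support_cons, List.count_cons_self] at h1
          omega
        have hvq3 : v ∉ q3.support := by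
          rw [← List.count_pos_iff]; omega
        have hz : z = y := by
          have : s(v, y) ∈ q.reverse.edges := by
            rw [Walk.edges_reverse, List.mem_reverse]; exact hedge
          rw [hq3, Walk.edges_cons, List.mem_cons] at this
          rcases this with heq | hmem
          · rw [eq_comm, Sym2.congr_right] at heq
            exact heq
          · exact absurd (q3.fst_mem_support_of_mem_edges hmem) hvq3
        subst hz
        have hq3len : q.length = q3.length + 1 := by
          have := congrArg Walk.length hq3
          simpa [Walk.length_reverse] using this
        have hqlen : q.length ≤ p.length := p.length_takeUntil_le hv
        have hq31 : walkSign τ q3 = 1 :=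
          IH p.length (by omega) z q3 (by omega)
        have : walkSign τ q = τ v z * walkSign τ q3 := by
          rw [← walkSign_reverse τ hs q, hq3, walkSign_cons]
        rw [this, hq31, mul_one, Int.units_mul_self]
      · -- a repeated vertex in q
        rw [Walk.isPath_def, List.nodup_iff_count_le_one] at hpath
        push_neg at hpath
        obtain ⟨z, hz2⟩ := hpath
        have hz2' : 2 ≤ q.support.count z := by omega
        have hz1 : z ∈ q.support := by
          rw [← List.count_pos_iff]; omega
        have hspec2 := q.take_spec hz1
        set a := q.takeUntil z hz1 with hadef
        set b := q.dropUntil z hz1 with hbdef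
        have hcounta : a.support.count z = 1 := q.count_support_takeUntil_eq_one hz1
        have hcountb : 1 ≤ b.support.tail.count z := by
          have := congrArg (fun l => List.count z l) (congrArg Walk.support hspec2)
          simp only [Walk.support_append, List.count_append] at this
          omega
        have hzb : z ∈ b.support.tail := by
          rw [← List.count_pos_iff]; omega
        have hbnn : ¬ b.Nil := by
          intro hnil
          rw [Walk.nil_iff_length_eq] at hnil
          have := b.length_support
          have h2 : b.support.tail.length = 0 := by
            have := List.length_tail (l := b.support)
            omega
          rw [List.length_eq_zero_iff] at h2
          rw [h2] at hzb
          simp at hzb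
        obtain ⟨z2, h4, q4, hb⟩ := Walk.not_nil_iff.mp hbnn
        have hz4 : z ∈ q4.support := by
          have : b.support.tail = q4.support := by rw [hb, Walk.support_cons]; rfl
          rwa [this] at hzb
        have hspec4 := q4.take_spec hz4
        set a2 := q4.takeUntil z hz4 with ha2def
        set b2 := q4.dropUntil z hz4 with hb2def
        -- length bookkeeping
        have hlq : a.length + b.length = q.length := by
          have := congrArg Walk.length hspec2
          simpa [Walk.length_append] using this
        have hlb : b.length = q4.length + 1 := by
          have := congrArg Walk.length hb
          simpa using this
        have hlq4 : a2.length + b2.length = q4.length := by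
          have := congrArg Walk.length hspec4
          simpa [Walk.length_append] using this
        have hqlen : q.length ≤ p.length := p.length_takeUntil_le hv
        -- IH applications
        have hcyc1 : walkSign τ (Walk.cons h4 a2) = 1 :=
          IH p.length (by omega) z (Walk.cons h4 a2) (by simp; omega)
        have hw2 : walkSign τ (Walk.cons h (a.append b2)) = 1 :=
          IH p.length (by omega) v (Walk.cons h (a.append b2))
            (by simp [Walk.length_append]; omega)
        rw [walkSign_cons] at hcyc1
        rw [walkSign_cons, walkSign_append] at hw2
        have hqd : walkSign τ q = walkSign τ a *
            (τ z z2 * (walkSign τ a2 * walkSign τ b2)) := by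
          conv_lhs => rw [← hspec2, hb]
          conv_lhs => rw [← hspec4]
          rw [walkSign_append, walkSign_cons, walkSign_append]
        rw [hqd]
        exact units_helper _ _ _ _ _ hcyc1 hw2

end Aux

/-- A bidirected graph is uniformly bidirected up to reorientation iff its associated
    signed graph `σ_B u v = -(β u v * β v u)` is antibalanced. -/
theorem uniform_up_to_reorientation_iff_antibalanced {V : Type*} (G : SimpleGraph V)
    (β : V → V → ℤˣ) :
    (∃ β' : V → V → ℤˣ,
      (∀ u : V, (∀ v, G.Adj u v → β' u v = 1) ∨ (∀ v, G.Adj u v → β' u v = -1)) ∧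
      (∀ u v : V, G.Adj u v →
        (β u v = β' u v ∧ β v u = β' v u) ∨ (β u v = -β' u v ∧ β v u = -β' v u))) ↔
    (∀ (v : V) (w : G.Walk v v), w.IsCycle →
      walkSign (fun a b => -(β a b * β b a)) w = (-1) ^ w.length) := by
  classical
  constructor
  · rintro ⟨β', h1, h2⟩ v w _
    set ε : V → ℤˣ := fun u => if ∀ x, G.Adj u x → β' u x = 1 then 1 else -1 with hεdef
    have hβ' : ∀ u x, G.Adj u x → β' u x = ε u := by
      intro u x hadj
      by_cases hc : ∀ x, G.Adj u x → β' u x = 1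
      · rw [hεdef]; simp only [if_pos hc]; exact hc x hadj
      · rw [hεdef]; simp only [if_neg hc]
        exact ((h1 u).resolve_left hc) x hadj
    have hτ : ∀ a b, G.Adj a b → β a b * β b a = ε a * ε b := by
      intro a b hab
      rcases h2 a b hab with ⟨e1, e2⟩ | ⟨e1, e2⟩ <;>
        rw [e1, e2, hβ' a b hab, hβ' b a hab.symm]
      rw [neg_mul_neg]
    have hneg := walkSign_neg (G := G) (fun a b => β a b * β b a) w
    rw [hneg, walkSign_telescope _ ε hτ w, Int.units_mul_self, mul_one]
  · intro hcyc
    have hsymm : ∀ a b : V, β a b * β b a = β b a * β a b := fun a b => mul_comm _ _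
    have hcyc' : ∀ (v : V) (w : G.Walk v v), w.IsCycle →
        walkSign (fun a b => β a b * β b a) w = 1 := by
      intro v w hc
      have h0 := hcyc v w hc
      rw [walkSign_neg (G := G) (fun a b => β a b * β b a) w] at h0
      have h1 : ((-1 : ℤˣ)) ^ w.length * walkSign (fun a b => β a b * β b a) w =
          (-1) ^ w.length * 1 := by rw [mul_one]; exact h0
      exact mul_left_cancel h1
    have hone : ∀ (v : V) (w : G.Walk v v),
        walkSign (fun a b => β a b * β b a) w = 1 := fun v w =>
      closed_walk_sign_eq_one _ hsymm hcyc' w.length v w le_rfl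
    -- build the switching function
    let root : V → V := fun v => (G.connectedComponentMk v).out
    have hreach : ∀ v, G.Reachable (root v) v := by
      intro v
      apply SimpleGraph.ConnectedComponent.eq.mp
      exact (G.connectedComponentMk v).out_eq
    let wlk : ∀ v, G.Walk (root v) v := fun v => (hreach v).some
    let ε : V → ℤˣ := fun v => walkSign (fun a b => β a b * β b a) (wlk v)
    have hτε : ∀ u v, G.Adj u v → β u v * β v u = ε u * ε v := by
      intro u v hadj
      have hroot : root u = root v := by
        have h5 : G.connectedComponentMk u = G.connectedComponentMk v :=
          SimpleGraph.ConnectedComponent.eq.mpr hadj.reachable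
        simp only [root, h5]
      have hclosed := hone (root u)
        (((wlk u).append (SimpleGraph.Walk.cons hadj (wlk v).reverse)).copy rfl hroot.symm)
      rw [walkSign_copy, walkSign_append, walkSign_cons,
        walkSign_reverse _ hsymm] at hclosed
      -- hclosed : ε u * (β u v * β v u * ε v) = 1
      have hεu : walkSign (fun a b => β a b * β b a) (wlk u) = ε u := rfl
      have hεv : walkSign (fun a b => β a b * β b a) (wlk v) = ε v := rfl
      rw [hεu, hεv] at hclosed
      have hne : (1 : ℤˣ) ≠ -1 := by decide
      have hne' : (-1 : ℤˣ) ≠ 1 := by decide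
      rcases Int.units_eq_one_or (ε u) with hu | hu <;>
      rcases Int.units_eq_one_or (ε v) with hv | hv <;>
      rcases Int.units_eq_one_or (β u v * β v u) with ht | ht <;>
        rw [hu, hv, ht] at hclosed ⊢ <;> simp_all [hne, hne']
    refine ⟨fun a _ => ε a, fun u => ?_, fun u v hadj => ?_⟩
    · rcases Int.units_eq_one_or (ε u) with hu | hu
      · exact Or.inl fun v _ => hu
      · exact Or.inr fun v _ => hu
    · have hprod : β u v * β v u = ε u * ε v := hτε u v hadj
      have hne : (1 : ℤˣ) ≠ -1 := by decide
      have hne' : (-1 : ℤˣ) ≠ 1 := by decide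
      rcases Int.units_eq_one_or (β u v) with h1 | h1 <;>
      rcases Int.units_eq_one_or (β v u) with h2 | h2 <;>
      rcases Int.units_eq_one_or (ε u) with h3 | h3 <;>
      rcases Int.units_eq_one_or (ε v) with h4 | h4 <;>
        simp_all [hne, hne']
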